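/- arXiv:1808.09213 — 5 statements merged into one kernel-verified Lean document; each statement's English description precedes it below -/
import Mathlib

section
/- Let M and M' be bisimilar concurrent game structures and κ an infinite computation (which belongs to both by computation identity). Then the unique runs ρ_M(κ) and ρ_{M'}(κ) induced by κ in M and M' respectively are statewise bisimilar, and the traces they induce are identical: τ_M(κ) = τ_{M'}(κ). -/
namespace CGSGame

abbrev Dir (Ag Ac : Type) := Ag → Ac

structure CGS (Ag AP Ac St : Type) where
  init : St
  feasible : Ag → St → Set Ac
  feasible_nonempty : ∀ i s, (feasible i s).Nonempty
  label : St → Set AP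
  trans : St → Dir Ag Ac → St

variable {Ag AP Ac St St' : Type}

def CGS.legal (M : CGS Ag AP Ac St) (s : St) (d : Dir Ag Ac) : Prop :=
  ∀ i, d i ∈ M.feasible i s

def CGS.step (M : CGS Ag AP Ac St) (s : St) (d : Dir Ag Ac) (s' : St) : Prop :=
  M.legal s d ∧ M.trans s d = s'

structure IsBisim (M : CGS Ag AP Ac St) (M' : CGS Ag AP Ac St') (R : St → St' → Prop) : Prop where
  label_eq : ∀ s t, R s t → M.label s = M'.label t
  forth : ∀ s t s' d, R s t → M.step s d s' → ∃ t', M'.step t d t' ∧ R s' t'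
  back : ∀ s t t' d, R s t → M'.step t d t' → ∃ s', M.step s d s' ∧ R s' t'

def BisimState (M : CGS Ag AP Ac St) (M' : CGS Ag AP Ac St') (s : St) (t : St') : Prop :=
  ∃ R, IsBisim M M' R ∧ R s t

def Bisimilar (M : CGS Ag AP Ac St) (M' : CGS Ag AP Ac St') : Prop :=
  BisimState M M' M.init M'.init

def CGS.statesOf (M : CGS Ag AP Ac St) (k : ℕ → Dir Ag Ac) : ℕ → St
  | 0 => M.init
  | n + 1 => M.trans (M.statesOf k n) (k n)

def CGS.InfComp (M : CGS Ag AP Ac St) (k : ℕ → Dir Ag Ac) : Prop :=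
  ∀ n, M.legal (M.statesOf k n) (k n)

def CGS.runFrom (M : CGS Ag AP Ac St) : St → List (Dir Ag Ac) → List St
  | s, [] => [s]
  | s, d :: l => s :: M.runFrom (M.trans s d) l

def CGS.runOf (M : CGS Ag AP Ac St) (k : List (Dir Ag Ac)) : List St :=
  M.runFrom M.init k

def CGS.endFrom (M : CGS Ag AP Ac St) : St → List (Dir Ag Ac) → St
  | s, [] => s
  | s, d :: l => M.endFrom (M.trans s d) l

def CGS.finalState (M : CGS Ag AP Ac St) (k : List (Dir Ag Ac)) : St :=
  M.endFrom M.init k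

def CGS.legalFrom (M : CGS Ag AP Ac St) : St → List (Dir Ag Ac) → Prop
  | _, [] => True
  | s, d :: l => M.legal s d ∧ M.legalFrom (M.trans s d) l

def CGS.FinComp (M : CGS Ag AP Ac St) (k : List (Dir Ag Ac)) : Prop :=
  M.legalFrom M.init k

def CGS.traceOf (M : CGS Ag AP Ac St) (k : List (Dir Ag Ac)) : List (Set AP) :=
  (M.runOf k).map M.label

def CGS.infTraceOf (M : CGS Ag AP Ac St) (k : ℕ → Dir Ag Ac) : ℕ → Set AP :=
  fun n => M.label (M.statesOf k n)

def CGS.IsHistory (M : CGS Ag AP Ac St) (p : List St) : Prop :=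
  ∃ k, M.FinComp k ∧ p = M.runOf k

def CGS.IsCompStrategy (M : CGS Ag AP Ac St) (i : Ag) (f : List (Dir Ag Ac) → Ac) : Prop :=
  ∀ k, M.FinComp k → f k ∈ M.feasible i (M.finalState k)

def CGS.IsRunStrategy (M : CGS Ag AP Ac St) (i : Ag) (f : List St → Ac) : Prop :=
  ∀ k, M.FinComp k → f (M.runOf k) ∈ M.feasible i (M.finalState k)

def CGS.IsTraceStrategy (M : CGS Ag AP Ac St) (i : Ag) (g : List (Set AP) → Ac) : Prop :=
  ∀ k, M.FinComp k → g (M.traceOf k) ∈ M.feasible i (M.finalState k)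

def CGS.RunInvariant (M : CGS Ag AP Ac St) (f : List (Dir Ag Ac) → Ac) : Prop :=
  ∀ k k', M.FinComp k → M.FinComp k' → M.runOf k = M.runOf k' → f k = f k'

def CGS.TraceInvariant (M : CGS Ag AP Ac St) (f : List (Dir Ag Ac) → Ac) : Prop :=
  ∀ k k', M.FinComp k → M.FinComp k' → M.traceOf k = M.traceOf k' → f k = f k'

def inducedPrefix (f : Ag → List (Dir Ag Ac) → Ac) : ℕ → List (Dir Ag Ac)
  | 0 => []
  | n + 1 => inducedPrefix f n ++ [fun i => f i (inducedPrefix f n)]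

/-- The computation induced by a profile of computation-based strategies. -/
def inducedComp (_M : CGS Ag AP Ac St) (f : Ag → List (Dir Ag Ac) → Ac) : ℕ → Dir Ag Ac :=
  fun n i => f i (inducedPrefix f n)

def inducedPrefixRun (M : CGS Ag AP Ac St) (f : Ag → List St → Ac) : ℕ → List (Dir Ag Ac)
  | 0 => []
  | n + 1 => inducedPrefixRun M f n ++ [fun i => f i (M.runOf (inducedPrefixRun M f n))]

/-- The computation induced by a profile of run-based strategies. -/
def inducedCompRun (M : CGS Ag AP Ac St) (f : Ag → List St → Ac) : ℕ → Dir Ag Ac :=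
  fun n i => f i (M.runOf (inducedPrefixRun M f n))

def inducedPrefixTr (M : CGS Ag AP Ac St) (g : Ag → List (Set AP) → Ac) : ℕ → List (Dir Ag Ac)
  | 0 => []
  | n + 1 => inducedPrefixTr M g n ++ [fun i => g i (M.traceOf (inducedPrefixTr M g n))]

/-- The computation induced by a profile of trace-based strategies. -/
def inducedCompTr (M : CGS Ag AP Ac St) (g : Ag → List (Set AP) → Ac) : ℕ → Dir Ag Ac :=
  fun n i => g i (M.traceOf (inducedPrefixTr M g n))

/-- Statewise bisimilarity of (finite) runs. -/
def SWBisim (M : CGS Ag AP Ac St) (M' : CGS Ag AP Ac St') (p : List St) (p' : List St') : Prop :=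
  List.Forall₂ (BisimState M M') p p'

/-- A run-based strategy is bisimulation-invariant if it chooses the same action at
statewise bisimilar histories. -/
def CGS.BisimInvariant (M : CGS Ag AP Ac St) (f : List St → Ac) : Prop :=
  ∀ p p', M.IsHistory p → M.IsHistory p' → SWBisim M M p p' → f p = f p'

open Classical in
/-- The strategy of a bisimilar structure corresponding to a bisimulation-invariant strategy. -/
noncomputable def tilde [Inhabited Ac] (M : CGS Ag AP Ac St) (M' : CGS Ag AP Ac St')
    (f : List St → Ac) : List St' → Ac :=
  fun p' => if h : ∃ p, M.IsHistory p ∧ SWBisim M M' p p' then f h.choose else default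

section NE
variable [DecidableEq Ag]

def CompNE (M : CGS Ag AP Ac St) (G : Ag → Set (ℕ → Dir Ag Ac))
    (f : Ag → List (Dir Ag Ac) → Ac) : Prop :=
  (∀ i, M.IsCompStrategy i (f i)) ∧
  ∀ i g, M.IsCompStrategy i g →
    inducedComp M (Function.update f i g) ∈ G i → inducedComp M f ∈ G i

def RunNE (M : CGS Ag AP Ac St) (G : Ag → Set (ℕ → Dir Ag Ac))
    (f : Ag → List St → Ac) : Prop :=
  (∀ i, M.IsRunStrategy i (f i)) ∧
  ∀ i g, M.IsRunStrategy i g →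
    inducedCompRun M (Function.update f i g) ∈ G i → inducedCompRun M f ∈ G i

def TraceNE (M : CGS Ag AP Ac St) (G : Ag → Set (ℕ → Dir Ag Ac))
    (g : Ag → List (Set AP) → Ac) : Prop :=
  (∀ i, M.IsTraceStrategy i (g i)) ∧
  ∀ i h, M.IsTraceStrategy i h →
    inducedCompTr M (Function.update g i h) ∈ G i → inducedCompTr M g ∈ G i

def RunInvNE (M : CGS Ag AP Ac St) (G : Ag → Set (ℕ → Dir Ag Ac))
    (f : Ag → List (Dir Ag Ac) → Ac) : Prop :=
  (∀ i, M.IsCompStrategy i (f i) ∧ M.RunInvariant (f i)) ∧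
  ∀ i g, M.IsCompStrategy i g → M.RunInvariant g →
    inducedComp M (Function.update f i g) ∈ G i → inducedComp M f ∈ G i

def TraceInvNE (M : CGS Ag AP Ac St) (G : Ag → Set (ℕ → Dir Ag Ac))
    (f : Ag → List (Dir Ag Ac) → Ac) : Prop :=
  (∀ i, M.IsCompStrategy i (f i) ∧ M.TraceInvariant (f i)) ∧
  ∀ i g, M.IsCompStrategy i g → M.TraceInvariant g →
    inducedComp M (Function.update f i g) ∈ G i → inducedComp M f ∈ G i

def BisimInvNE (M : CGS Ag AP Ac St) (G : Ag → Set (ℕ → Dir Ag Ac))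
    (f : Ag → List St → Ac) : Prop :=
  (∀ i, M.IsRunStrategy i (f i) ∧ M.BisimInvariant (f i)) ∧
  ∀ i g, M.IsRunStrategy i g → M.BisimInvariant g →
    inducedCompRun M (Function.update f i g) ∈ G i → inducedCompRun M f ∈ G i

end NE

theorem computations_induce_bisimilar_runs
    (M : CGS Ag AP Ac St) (M' : CGS Ag AP Ac St') (h : Bisimilar M M')
    (k : ℕ → Dir Ag Ac) (hk : M.InfComp k) :
    (∀ n, BisimState M M' (M.statesOf k n) (M'.statesOf k n)) ∧
    M.infTraceOf k = M'.infTraceOf k := by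
  obtain ⟨R, hR, hinit⟩ := h
  have key : ∀ n, R (M.statesOf k n) (M'.statesOf k n) := by
    intro n
    induction n with
    | zero => exact hinit
    | succ n ih =>
      have hstep : M.step (M.statesOf k n) (k n) (M.statesOf k (n+1)) := ⟨hk n, rfl⟩
      obtain ⟨t', ⟨_, ht⟩, hRt⟩ := hR.forth _ _ _ _ ih hstep
      simpa [CGS.statesOf, ht] using hRt
  refine ⟨fun n => ⟨R, hR, key n⟩, funext fun n => ?_⟩
  exact hR.label_eq _ _ (key n)
end CGSGame
end

section
/- Let M and M' be bisimilar concurrent game structures. Then every computation-based strategy for a player i in M is also a computation-based strategy for i in M', and for every profile f of computation-based strategies, the computation induced by f in M equals the computation induced by f in M': κ_M(f) = κ_{M'}(f). -/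
namespace CGSGame

variable {Ag AP Ac St St' : Type}

open Classical in
lemma feasible_eq_of_bisim {M : CGS Ag AP Ac St} {M' : CGS Ag AP Ac St'}
    {R : St → St' → Prop} (hR : IsBisim M M' R) {s t} (hst : R s t) (i : Ag) :
    M.feasible i s = M'.feasible i t := by
  ext a
  constructor
  · intro ha
    set d : Dir Ag Ac := fun j => if j = i then a else (M.feasible_nonempty j s).choose with hd
    have hleg : M.legal s d := by
      intro j
      by_cases hj : j = i
      · subst hj; simpa [hd] using ha
      · simpa [hd, hj] using (M.feasible_nonempty j s).choose_spec
    obtain ⟨t', hstep, _⟩ := hR.forth s t (M.trans s d) d hst ⟨hleg, rfl⟩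
    have := hstep.1 i
    simpa [hd] using this
  · intro ha
    set d : Dir Ag Ac := fun j => if j = i then a else (M'.feasible_nonempty j t).choose with hd
    have hleg : M'.legal t d := by
      intro j
      by_cases hj : j = i
      · subst hj; simpa [hd] using ha
      · simpa [hd, hj] using (M'.feasible_nonempty j t).choose_spec
    obtain ⟨s', hstep, _⟩ := hR.back s t (M'.trans t d) d hst ⟨hleg, rfl⟩
    have := hstep.1 i
    simpa [hd] using this

lemma legalFrom_transfer {M : CGS Ag AP Ac St} {M' : CGS Ag AP Ac St'}
    {R : St → St' → Prop} (hR : IsBisim M M' R) :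
    ∀ (k : List (Dir Ag Ac)) (s t), R s t →
      (M.legalFrom s k → M'.legalFrom t k ∧ R (M.endFrom s k) (M'.endFrom t k)) ∧
      (M'.legalFrom t k → M.legalFrom s k ∧ R (M.endFrom s k) (M'.endFrom t k)) := by
  intro k
  induction k with
  | nil => intro s t hst; exact ⟨fun _ => ⟨trivial, hst⟩, fun _ => ⟨trivial, hst⟩⟩
  | cons d l ih =>
    intro s t hst
    constructor
    · rintro ⟨hleg, hl⟩
      obtain ⟨t', ⟨hleg', ht'⟩, hR'⟩ := hR.forth s t (M.trans s d) d hst ⟨hleg, rfl⟩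
      subst ht'
      obtain ⟨h1, h2⟩ := (ih (M.trans s d) (M'.trans t d) hR').1 hl
      exact ⟨⟨hleg', h1⟩, h2⟩
    · rintro ⟨hleg, hl⟩
      obtain ⟨s', ⟨hleg', hs'⟩, hR'⟩ := hR.back s t (M'.trans t d) d hst ⟨hleg, rfl⟩
      subst hs'
      obtain ⟨h1, h2⟩ := (ih (M.trans s d) (M'.trans t d) hR').2 hl
      exact ⟨⟨hleg', h1⟩, h2⟩

theorem comp_strategy_transfer
    (M : CGS Ag AP Ac St) (M' : CGS Ag AP Ac St') (h : Bisimilar M M') :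
    (∀ (i : Ag) (f : List (Dir Ag Ac) → Ac),
       M.IsCompStrategy i f → M'.IsCompStrategy i f) ∧
    (∀ f : Ag → List (Dir Ag Ac) → Ac, (∀ i, M.IsCompStrategy i (f i)) →
       inducedComp M f = inducedComp M' f) := by
  obtain ⟨R, hR, hinit⟩ := h
  refine ⟨?_, fun f _ => rfl⟩
  intro i f hf k hk
  obtain ⟨hM, hend⟩ := (legalFrom_transfer hR k M.init M'.init hinit).2 hk
  have := hf k hM
  rw [CGS.finalState] at this ⊢; rwa [feasible_eq_of_bisim hR hend i] at this
end CGSGame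
end

section
/- Let M and M' be bisimilar concurrent game structures. Then every trace-based strategy for a player i in M is also a trace-based strategy for i in M', and for every profile g of trace-based strategies, κ_M(g) = κ_{M'}(g). -/
namespace CGSGame

variable {Ag AP Ac St St' : Type}

lemma IsBisim.flip {M : CGS Ag AP Ac St} {M' : CGS Ag AP Ac St'} {R}
    (h : IsBisim M M' R) : IsBisim M' M (fun t s => R s t) where
  label_eq := fun t s hr => (h.label_eq s t hr).symm
  forth := fun t s t' d hr hs => h.back s t t' d hr hs
  back := fun t s s' d hr hs => h.forth s t s' d hr hs

lemma key_transfer {M : CGS Ag AP Ac St} {M' : CGS Ag AP Ac St'} {R}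
    (hR : IsBisim M M' R) :
    ∀ (k : List (Dir Ag Ac)) (s : St) (t : St'), R s t → M.legalFrom s k →
      M'.legalFrom t k ∧ R (M.endFrom s k) (M'.endFrom t k) ∧
      (M.runFrom s k).map M.label = (M'.runFrom t k).map M'.label
  | [], s, t, hr, _ => ⟨trivial, hr, by
      simp [CGS.runFrom, CGS.endFrom, hR.label_eq s t hr]⟩
  | d :: l, s, t, hr, hl => by
      obtain ⟨hd, hl⟩ := hl
      obtain ⟨t', ⟨hd', ht'⟩, hr'⟩ := hR.forth s t (M.trans s d) d hr ⟨hd, rfl⟩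
      subst ht'
      obtain ⟨h1, h2, h3⟩ := key_transfer hR l (M.trans s d) (M'.trans t d) hr' hl
      exact ⟨⟨hd', h1⟩, h2, by
        simpa [CGS.runFrom, CGS.endFrom, hR.label_eq s t hr] using h3⟩

lemma feasible_transfer {M : CGS Ag AP Ac St} {M' : CGS Ag AP Ac St'} {R}
    (hR : IsBisim M M' R) {s t} (hr : R s t) {i : Ag} {a : Ac}
    (ha : a ∈ M.feasible i s) : a ∈ M'.feasible i t := by
  classical
  set d : Dir Ag Ac := fun j => if j = i then a else (M.feasible_nonempty j s).choose
    with hdd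
  have hleg : M.legal s d := by
    intro j
    by_cases hj : j = i
    · subst hj; simpa [hdd] using ha
    · simpa [hdd, hj] using (M.feasible_nonempty j s).choose_spec
  obtain ⟨t', ⟨hd', _⟩, _⟩ := hR.forth s t (M.trans s d) d hr ⟨hleg, rfl⟩
  simpa [hdd] using hd' i

lemma legalFrom_append (M : CGS Ag AP Ac St) :
    ∀ (k : List (Dir Ag Ac)) (s : St) (d : Dir Ag Ac),
      M.legalFrom s (k ++ [d]) ↔ M.legalFrom s k ∧ M.legal (M.endFrom s k) d
  | [], s, d => by simp [CGS.legalFrom, CGS.endFrom]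
  | e :: l, s, d => by
      simp [CGS.legalFrom, CGS.endFrom, legalFrom_append M l, and_assoc]

theorem trace_strategy_transfer
    (M : CGS Ag AP Ac St) (M' : CGS Ag AP Ac St') (h : Bisimilar M M') :
    (∀ (i : Ag) (g : List (Set AP) → Ac),
       M.IsTraceStrategy i g → M'.IsTraceStrategy i g) ∧
    (∀ g : Ag → List (Set AP) → Ac, (∀ i, M.IsTraceStrategy i (g i)) →
       inducedCompTr M g = inducedCompTr M' g) := by
  obtain ⟨R, hR, hr0⟩ := h
  have hback : ∀ k, M'.FinComp k →
      M.FinComp k ∧ R (M.finalState k) (M'.finalState k) ∧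
      M.traceOf k = M'.traceOf k := by
    intro k hk
    obtain ⟨h1, h2, h3⟩ := key_transfer hR.flip k M'.init M.init hr0 hk
    exact ⟨h1, h2, h3.symm⟩
  have hforth : ∀ k, M.FinComp k →
      M'.FinComp k ∧ R (M.finalState k) (M'.finalState k) ∧
      M.traceOf k = M'.traceOf k := by
    intro k hk
    exact key_transfer hR k M.init M'.init hr0 hk
  constructor
  · intro i g hg k hk
    obtain ⟨hk', hrf, htr⟩ := hback k hk
    have := hg k hk'
    rw [htr] at this
    exact feasible_transfer hR hrf this
  · intro g hg
    have hpfx : ∀ n, inducedPrefixTr M g n = inducedPrefixTr M' g n ∧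
        M.FinComp (inducedPrefixTr M g n) := by
      intro n
      induction n with
      | zero => exact ⟨rfl, trivial⟩
      | succ n ih =>
        obtain ⟨heq, hfc⟩ := ih
        obtain ⟨_, _, htr⟩ := hforth _ hfc
        have hdir : (fun i => g i (M.traceOf (inducedPrefixTr M g n))) =
            (fun i => g i (M'.traceOf (inducedPrefixTr M' g n))) := by
          rw [htr, heq]
        constructor
        · show inducedPrefixTr M g n ++ _ = inducedPrefixTr M' g n ++ _
          rw [hdir, heq]
        · rw [CGS.FinComp, inducedPrefixTr, legalFrom_append]
          exact ⟨hfc, fun i => hg i _ hfc⟩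
    funext n i
    obtain ⟨heq, hfc⟩ := hpfx n
    obtain ⟨_, _, htr⟩ := hforth _ hfc
    simp only [inducedCompTr]
    rw [htr, heq]
end CGSGame
end

section
/- Let G = (M, Γ_1,...,Γ_n) and G' = (M', Γ_1,...,Γ_n) be CGS-games on bisimilar concurrent game structures with identical goal sets, and let f be a computation-based strategy profile. Then f is a Nash equilibrium in computation-based strategies in G if and only if f is a Nash equilibrium in computation-based strategies in G'. -/
namespace CGSGame

variable {Ag AP Ac St St' : Type}

section Aux
variable {M : CGS Ag AP Ac St} {M' : CGS Ag AP Ac St'} {R : St → St' → Prop}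

lemma legal_iff_of_bisim (hb : IsBisim M M' R) {s t} (hst : R s t) (d : Dir Ag Ac) :
    M.legal s d ↔ M'.legal t d := by
  constructor
  · intro hd
    obtain ⟨t', ht, _⟩ := hb.forth s t (M.trans s d) d hst ⟨hd, rfl⟩
    exact ht.1
  · intro hd
    obtain ⟨s', hs, _⟩ := hb.back s t (M'.trans t d) d hst ⟨hd, rfl⟩
    exact hs.1

lemma trans_rel_of_bisim (hb : IsBisim M M' R) {s t} (hst : R s t) {d : Dir Ag Ac}
    (hd : M.legal s d) : R (M.trans s d) (M'.trans t d) := by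
  obtain ⟨t', ⟨hl, he⟩, hr⟩ := hb.forth s t (M.trans s d) d hst ⟨hd, rfl⟩
  rwa [he]

lemma legalFrom_iff_of_bisim (hb : IsBisim M M' R) :
    ∀ (k : List (Dir Ag Ac)) {s t}, R s t →
      (M.legalFrom s k ↔ M'.legalFrom t k) ∧
      (M.legalFrom s k → R (M.endFrom s k) (M'.endFrom t k)) := by
  intro k
  induction k with
  | nil => intro s t hst; exact ⟨Iff.rfl, fun _ => hst⟩
  | cons d l ih =>
    intro s t hst
    constructor
    · simp only [CGS.legalFrom]
      constructor
      · rintro ⟨hd, hl⟩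
        exact ⟨(legal_iff_of_bisim hb hst d).mp hd,
          ((ih (trans_rel_of_bisim hb hst hd)).1).mp hl⟩
      · rintro ⟨hd, hl⟩
        have hd' := (legal_iff_of_bisim hb hst d).mpr hd
        exact ⟨hd', ((ih (trans_rel_of_bisim hb hst hd')).1).mpr hl⟩
    · rintro ⟨hd, hl⟩
      exact (ih (trans_rel_of_bisim hb hst hd)).2 hl

open Classical in
lemma feasible_iff_of_bisim [DecidableEq Ag] (hb : IsBisim M M' R) {s t} (hst : R s t)
    (i : Ag) (a : Ac) : a ∈ M.feasible i s ↔ a ∈ M'.feasible i t := by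
  constructor
  · intro ha
    let d : Dir Ag Ac := fun j => if j = i then a else (M.feasible_nonempty j s).some
    have hleg : M.legal s d := by
      intro j
      by_cases hj : j = i
      · subst hj; simpa [d] using ha
      · simpa [d, hj] using (M.feasible_nonempty j s).some_mem
    have hleg' := (legal_iff_of_bisim hb hst d).mp hleg
    simpa [d] using hleg' i
  · intro ha
    let d : Dir Ag Ac := fun j => if j = i then a else (M'.feasible_nonempty j t).some
    have hleg' : M'.legal t d := by
      intro j
      by_cases hj : j = i
      · subst hj; simpa [d] using ha
      · simpa [d, hj] using (M'.feasible_nonempty j t).some_mem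
    have hleg := (legal_iff_of_bisim hb hst d).mpr hleg'
    simpa [d] using hleg i

lemma compStrategy_iff_of_bisim [DecidableEq Ag] (hb : IsBisim M M' R)
    (hR : R M.init M'.init) (i : Ag) (g : List (Dir Ag Ac) → Ac) :
    M.IsCompStrategy i g ↔ M'.IsCompStrategy i g := by
  constructor
  · intro hg k hk'
    have hk : M.FinComp k := ((legalFrom_iff_of_bisim hb k hR).1).mpr hk'
    have hrel := (legalFrom_iff_of_bisim hb k hR).2 hk
    exact (feasible_iff_of_bisim hb hrel i (g k)).mp (hg k hk)
  · intro hg k hk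
    have hk' : M'.FinComp k := ((legalFrom_iff_of_bisim hb k hR).1).mp hk
    have hrel := (legalFrom_iff_of_bisim hb k hR).2 hk
    exact (feasible_iff_of_bisim hb hrel i (g k)).mpr (hg k hk')

end Aux

theorem computation_NE_invariance [DecidableEq Ag]
    (M : CGS Ag AP Ac St) (M' : CGS Ag AP Ac St') (h : Bisimilar M M')
    (G : Ag → Set (ℕ → Dir Ag Ac)) (f : Ag → List (Dir Ag Ac) → Ac) :
    CompNE M G f ↔ CompNE M' G f := by
  obtain ⟨R, hb, hR⟩ := h
  have hstrat := compStrategy_iff_of_bisim hb hR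
  have hind : ∀ g, inducedComp M g = inducedComp M' g := fun _ => rfl
  constructor
  · rintro ⟨h1, h2⟩
    refine ⟨fun i => (hstrat i (f i)).mp (h1 i), fun i g hg hmem => ?_⟩
    rw [← hind]
    exact h2 i g ((hstrat i g).mpr hg) (by rwa [hind])
  · rintro ⟨h1, h2⟩
    refine ⟨fun i => (hstrat i (f i)).mpr (h1 i), fun i g hg hmem => ?_⟩
    rw [hind]
    exact h2 i g ((hstrat i g).mp hg) (by rwa [← hind])
end CGSGame
end

section
/- In a Boolean game structure, any two statewise bisimilar finite histories are identical; consequently every run-based strategy in a Boolean game structure is bisimulation-invariant, and Nash equilibrium (and its existence) is invariant under bisimilarity for games on Boolean game structures. -/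
namespace CGSGame

variable {Ag AP Ac St St' : Type}

/-- A Boolean game structure: actions are nonempty sets of the propositional
variables owned by the respective player, and the label of any successor state is
the union of the actions just taken. -/
def IsBooleanGS (M : CGS Ag AP (Set AP) St) (own : AP → Ag) : Prop :=
  (∀ i s a, a ∈ M.feasible i s → a.Nonempty ∧ ∀ p ∈ a, own p = i) ∧
  (∀ s d, M.legal s d → M.label (M.trans s d) = ⋃ i, d i)

section Aux
variable {Ag AP Ac St St' : Type}

lemma BisimState.label_eq' {M : CGS Ag AP Ac St} {M' : CGS Ag AP Ac St'} {s t}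
    (h : BisimState M M' s t) : M.label s = M'.label t := by
  obtain ⟨R, hR, hst⟩ := h; exact hR.label_eq s t hst

lemma BisimState.legal_of {M : CGS Ag AP Ac St} {M' : CGS Ag AP Ac St'} {s t d}
    (h : BisimState M M' s t) (hd : M.legal s d) : M'.legal t d := by
  obtain ⟨R, hR, hst⟩ := h
  obtain ⟨t', ⟨hl, _⟩, _⟩ := hR.forth s t (M.trans s d) d hst ⟨hd, rfl⟩
  exact hl

lemma BisimState.symm {M : CGS Ag AP Ac St} {M' : CGS Ag AP Ac St'} {s t}
    (h : BisimState M M' s t) : BisimState M' M t s := by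
  obtain ⟨R, hR, hst⟩ := h
  exact ⟨fun t s => R s t, ⟨fun t s hts => (hR.label_eq s t hts).symm,
    fun t s t' d hts hstep => hR.back s t t' d hts hstep,
    fun t s s' d hts hstep => hR.forth s t s' d hts hstep⟩, hst⟩

lemma BisimState.trans_rel {M : CGS Ag AP Ac St} {M' : CGS Ag AP Ac St'} {s t d}
    (h : BisimState M M' s t) (hd : M.legal s d) :
    BisimState M M' (M.trans s d) (M'.trans t d) := by
  obtain ⟨R, hR, hst⟩ := h
  obtain ⟨t', ⟨_, ht'⟩, hrel⟩ := hR.forth s t (M.trans s d) d hst ⟨hd, rfl⟩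
  exact ⟨R, hR, ht' ▸ hrel⟩

lemma BisimState.feasible_sub [DecidableEq Ag] {M : CGS Ag AP Ac St} {M' : CGS Ag AP Ac St'}
    {s t} (h : BisimState M M' s t) (i : Ag) {a} (ha : a ∈ M.feasible i s) :
    a ∈ M'.feasible i t := by
  set d : Dir Ag Ac := Function.update (fun j => (M.feasible_nonempty j s).choose) i a with hdd
  have hleg : M.legal s d := by
    intro j
    rcases eq_or_ne j i with rfl | hj
    · simpa [hdd] using ha
    · simpa [hdd, Function.update_of_ne hj] using (M.feasible_nonempty j s).choose_spec
  have := h.legal_of hleg i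
  simpa [hdd] using this

lemma BisimState.feasible_eq [DecidableEq Ag] {M : CGS Ag AP Ac St} {M' : CGS Ag AP Ac St'}
    {s t} (h : BisimState M M' s t) (i : Ag) : M.feasible i s = M'.feasible i t :=
  Set.ext fun _ => ⟨fun ha => h.feasible_sub i ha, fun ha => h.symm.feasible_sub i ha⟩

/-- Membership in a component direction is determined by ownership. -/
lemma bool_mem_dir {M : CGS Ag AP (Set AP) St} {own : AP → Ag} (hM : IsBooleanGS M own)
    {s d} (hd : M.legal s d) (i : Ag) (p : AP) :
    p ∈ d i ↔ p ∈ (⋃ j, d j) ∧ own p = i := by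
  constructor
  · intro hp
    exact ⟨Set.mem_iUnion.2 ⟨i, hp⟩, (hM.1 i s (d i) (hd i)).2 p hp⟩
  · rintro ⟨hu, hop⟩
    obtain ⟨j, hj⟩ := Set.mem_iUnion.1 hu
    have : own p = j := (hM.1 j s (d j) (hd j)).2 p hj
    rw [hop.symm.trans this]
    exact hj

lemma bool_action_eq {M : CGS Ag AP (Set AP) St} {own : AP → Ag} (hM : IsBooleanGS M own)
    {s : St} {d d' : Dir Ag (Set AP)} (hd : M.legal s d) (hd' : M.legal s d')
    (h : M.label (M.trans s d) = M.label (M.trans s d')) : d = d' := by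
  have hu : (⋃ j, d j) = ⋃ j, d' j := by
    rw [← hM.2 s d hd, ← hM.2 s d' hd', h]
  funext i
  ext p
  rw [bool_mem_dir hM hd, bool_mem_dir hM hd', hu]

def extractDir (own : AP → Ag) (a : Set AP) : Dir Ag (Set AP) := fun i => {p ∈ a | own p = i}

lemma extract_label {M : CGS Ag AP (Set AP) St} {own : AP → Ag} (hM : IsBooleanGS M own)
    {s d} (hd : M.legal s d) : extractDir own (M.label (M.trans s d)) = d := by
  funext i
  ext p
  rw [bool_mem_dir hM hd]
  simp [extractDir, hM.2 s d hd]

lemma runFrom_eq_cons (M : CGS Ag AP Ac St) (t : St) (l : List (Dir Ag Ac)) :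
    M.runFrom t l = t :: (M.runFrom t l).tail := by cases l <;> rfl

lemma runFrom_length (M : CGS Ag AP Ac St) :
    ∀ (k : List (Dir Ag Ac)) (s : St), (M.runFrom s k).length = k.length + 1 := by
  intro k
  induction k with
  | nil => intro s; rfl
  | cons d l ih => intro s; simp [CGS.runFrom, ih]

lemma legalFrom_append_single (M : CGS Ag AP Ac St) :
    ∀ (k : List (Dir Ag Ac)) (s : St) (d : Dir Ag Ac),
      M.legalFrom s k → M.legal (M.endFrom s k) d → M.legalFrom s (k ++ [d]) := by
  intro k
  induction k with
  | nil => intro s d _ hd; exact ⟨hd, trivial⟩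
  | cons e l ih =>
      intro s d hk hd
      exact ⟨hk.1, ih _ d hk.2 hd⟩

/-- In a Boolean GS, the run determines the directions. -/
lemma extract_runFrom {M : CGS Ag AP (Set AP) St} {own : AP → Ag} (hM : IsBooleanGS M own) :
    ∀ (k : List (Dir Ag (Set AP))) (s : St) (d : Dir Ag (Set AP)),
      M.legal s d → M.legalFrom (M.trans s d) k →
      (M.runFrom (M.trans s d) k).map (fun u => extractDir own (M.label u)) = d :: k := by
  intro k
  induction k with
  | nil =>
      intro s d hd _
      simp [CGS.runFrom, extract_label hM hd]
  | cons e l ih =>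
      intro s d hd hk
      have h1 := ih (M.trans s d) e hk.1 hk.2
      simp only [CGS.runFrom, List.map_cons] at h1 ⊢
      rw [extract_label hM hd, h1]

def extractRun (M : CGS Ag AP (Set AP) St) (own : AP → Ag) (p : List St) :
    List (Dir Ag (Set AP)) :=
  p.tail.map (fun u => extractDir own (M.label u))

lemma extractRun_runOf {M : CGS Ag AP (Set AP) St} {own : AP → Ag} (hM : IsBooleanGS M own)
    {k} (hk : M.FinComp k) : extractRun M own (M.runOf k) = k := by
  cases k with
  | nil => rfl
  | cons d l =>
      have := extract_runFrom hM l M.init d hk.1 hk.2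
      simpa [extractRun, CGS.runOf, CGS.runFrom] using this

lemma run_unique {M : CGS Ag AP (Set AP) St} {own : AP → Ag} (hM : IsBooleanGS M own) :
    ∀ (k k' : List (Dir Ag (Set AP))) (s : St),
      M.legalFrom s k → M.legalFrom s k' →
      List.Forall₂ (BisimState M M) (M.runFrom s k) (M.runFrom s k') → k = k' := by
  intro k
  induction k with
  | nil =>
      intro k' s _ _ hf
      cases k' with
      | nil => rfl
      | cons d' l' =>
          have := hf.length_eq
          simp [runFrom_length] at this
  | cons d l ih =>
      intro k' s hk hk'
      cases k' with
      | nil =>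
          intro hf
          have := hf.length_eq
          simp [runFrom_length] at this
      | cons d' l' =>
          intro hf
          simp only [CGS.runFrom] at hf
          rw [List.forall₂_cons] at hf
          obtain ⟨-, hf⟩ := hf
          have hb : BisimState M M (M.trans s d) (M.trans s d') := by
            have hf2 := hf
            rw [runFrom_eq_cons M (M.trans s d) l, runFrom_eq_cons M (M.trans s d') l',
              List.forall₂_cons] at hf2
            exact hf2.1
          have hdd : d = d' := bool_action_eq hM hk.1 hk'.1 hb.label_eq'
          subst hdd
          rw [ih l' (M.trans s d) hk.2 hk'.2 hf]

lemma legalFrom_bisim {M : CGS Ag AP Ac St} {M' : CGS Ag AP Ac St'} :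
    ∀ (k : List (Dir Ag Ac)) (s : St) (t : St'), BisimState M M' s t → M.legalFrom s k →
      M'.legalFrom t k ∧ BisimState M M' (M.endFrom s k) (M'.endFrom t k) := by
  intro k
  induction k with
  | nil => intro s t h _; exact ⟨trivial, h⟩
  | cons d l ih =>
      intro s t h hk
      have hleg := h.legal_of hk.1
      have hnext := h.trans_rel hk.1
      obtain ⟨h1, h2⟩ := ih (M.trans s d) (M'.trans t d) hnext hk.2
      exact ⟨⟨hleg, h1⟩, h2⟩

lemma finComp_bisim {M : CGS Ag AP Ac St} {M' : CGS Ag AP Ac St'}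
    (h : Bisimilar M M') {k} (hk : M.FinComp k) :
    M'.FinComp k ∧ BisimState M M' (M.finalState k) (M'.finalState k) :=
  legalFrom_bisim k M.init M'.init h hk

lemma bisimilar_symm {M : CGS Ag AP Ac St} {M' : CGS Ag AP Ac St'}
    (h : Bisimilar M M') : Bisimilar M' M := BisimState.symm h

lemma inducedCompRun_corr [DecidableEq Ag] {M : CGS Ag AP Ac St} {M' : CGS Ag AP Ac St'}
    {F : Ag → List St → Ac} {F' : Ag → List St' → Ac}
    (hS : ∀ j, M.IsRunStrategy j (F j))
    (hFF : ∀ j k, M.FinComp k → F j (M.runOf k) = F' j (M'.runOf k)) :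
    inducedCompRun M F = inducedCompRun M' F' := by
  have key : ∀ n, inducedPrefixRun M F n = inducedPrefixRun M' F' n ∧
      M.FinComp (inducedPrefixRun M F n) := by
    intro n
    induction n with
    | zero => exact ⟨rfl, trivial⟩
    | succ n ih =>
        obtain ⟨heq, hfc⟩ := ih
        have hd : (fun i => F i (M.runOf (inducedPrefixRun M F n))) =
            fun i => F' i (M'.runOf (inducedPrefixRun M' F' n)) := by
          funext i
          rw [← heq]
          exact hFF i _ hfc
        constructor
        · show inducedPrefixRun M F n ++ [fun i => F i (M.runOf (inducedPrefixRun M F n))] =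
            inducedPrefixRun M' F' n ++ [fun i => F' i (M'.runOf (inducedPrefixRun M' F' n))]
          rw [hd, heq]
        · apply legalFrom_append_single M (inducedPrefixRun M F n) M.init _ hfc
          intro i
          exact hS i _ hfc
  have key2 : ∀ n, (fun i => F i (M.runOf (inducedPrefixRun M F n))) =
      (fun i => F' i (M'.runOf (inducedPrefixRun M' F' n))) := by
    intro n
    funext i
    rw [← (key n).1]
    exact hFF i _ (key n).2
  funext n i
  exact congrFun (key2 n) i

lemma runNE_transfer [DecidableEq Ag] {M : CGS Ag AP (Set AP) St} {M' : CGS Ag AP (Set AP) St'}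
    {own : AP → Ag} {own' : AP → Ag} (hM : IsBooleanGS M own) (hM' : IsBooleanGS M' own')
    (hbis : Bisimilar M M') (G : Ag → Set (ℕ → Dir Ag (Set AP))) :
    (∃ f, RunNE M G f) → ∃ f, RunNE M' G f := by
  rintro ⟨f, hf1, hf2⟩
  set f' : Ag → List St' → Set AP := fun i p' => f i (M.runOf (extractRun M' own' p')) with hf'
  have hFF : ∀ j k, M.FinComp k → f j (M.runOf k) = f' j (M'.runOf k) := by
    intro j k hk
    have hk' : M'.FinComp k := (finComp_bisim hbis hk).1
    simp only [hf', extractRun_runOf hM' hk']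
  have hstrat : ∀ i, M'.IsRunStrategy i (f' i) := by
    intro i k hk'
    have hk : M.FinComp k := (finComp_bisim (bisimilar_symm hbis) hk').1
    rw [← hFF i k hk, ← (finComp_bisim hbis hk).2.feasible_eq i]
    exact hf1 i k hk
  refine ⟨f', hstrat, ?_⟩
  intro i g' hg' hmem
  set g : List St → Set AP := fun p => g' (M'.runOf (extractRun M own p)) with hg
  have hGG : ∀ k, M.FinComp k → g (M.runOf k) = g' (M'.runOf k) := by
    intro k hk
    simp only [hg, extractRun_runOf hM hk]
  have hgstrat : M.IsRunStrategy i g := by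
    intro k hk
    rw [hGG k hk, (finComp_bisim hbis hk).2.feasible_eq i]
    exact hg' k (finComp_bisim hbis hk).1
  have hA : inducedCompRun M f = inducedCompRun M' f' := inducedCompRun_corr hf1 hFF
  have hB : inducedCompRun M (Function.update f i g) =
      inducedCompRun M' (Function.update f' i g') := by
    apply inducedCompRun_corr
    · intro j
      rcases eq_or_ne j i with rfl | hj
      · simpa using hgstrat
      · simpa [Function.update_of_ne hj] using hf1 j
    · intro j k hk
      rcases eq_or_ne j i with rfl | hj
      · simpa using hGG k hk
      · simpa [Function.update_of_ne hj] using hFF j k hk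
  rw [← hA]
  exact hf2 i g hgstrat (hB ▸ hmem)

end Aux

theorem boolean_GS_invariance [DecidableEq Ag]
    (M : CGS Ag AP (Set AP) St) (M' : CGS Ag AP (Set AP) St')
    (own own' : AP → Ag) (hM : IsBooleanGS M own) (hM' : IsBooleanGS M' own') :
    (∀ p p', M.IsHistory p → M.IsHistory p' → SWBisim M M p p' → p = p') ∧
    (∀ f : List St → Set AP, M.BisimInvariant f) ∧
    (Bisimilar M M' → ∀ G : Ag → Set (ℕ → Dir Ag (Set AP)),
       ((∃ f, RunNE M G f) ↔ (∃ f, RunNE M' G f))) := by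
  have part1 : ∀ p p', M.IsHistory p → M.IsHistory p' → SWBisim M M p p' → p = p' := by
    rintro p p' ⟨k, hk, rfl⟩ ⟨k', hk', rfl⟩ hsw
    rw [run_unique hM k k' M.init hk hk' hsw]
  refine ⟨part1, ?_, ?_⟩
  · intro f p p' hp hp' hsw
    rw [part1 p p' hp hp' hsw]
  · intro hbis G
    exact ⟨runNE_transfer hM hM' hbis G, runNE_transfer hM' hM (bisimilar_symm hbis) G⟩
end CGSGame
end
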